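/- arXiv:1901.02093 — 4 statements merged into one kernel-verified Lean document; each statement's English description precedes it below -/
import Mathlib

section
/- Let f be a function holomorphic on the open annulus {z : r₁ < |z| < r₃} and continuous on its closure, where 0 < r₁ < r₂ < r₃. Set M(r) := sup_{|z|=r} |f(z)| and θ := ln(r₃/r₂)/ln(r₃/r₁). Then M(r₂) ≤ M(r₁)^θ · M(r₃)^{1−θ}. -/
/-!
Under `exp`, the vertical strip `log r₁ ≤ re z ≤ log r₃` covers the closed annulus, and the vertical
lines `re z = log r` are mapped onto the circles `‖w‖ = r`. Hadamard's three lines theorem for the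
bounded holomorphic function `f ∘ exp` on that strip is therefore the three circles theorem for `f`,
with the convexity parameter `(log r₂ - log r₁) / (log r₃ - log r₁) = 1 - θ`.
-/

open Complex Set Metric Complex.HadamardThreeLines

namespace Complex

variable {r₁ r₃ : ℝ}

lemma mapsTo_exp_verticalStrip_log (h1 : 0 < r₁) (h3 : 0 < r₃) :
    MapsTo exp (verticalStrip (Real.log r₁) (Real.log r₃)) {z : ℂ | r₁ < ‖z‖ ∧ ‖z‖ < r₃} :=
  fun _ ⟨hl, hu⟩ ↦ by
    rw [mem_ofPred_eq, norm_exp]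
    exact ⟨(Real.log_lt_iff_lt_exp h1).1 hl, (Real.lt_log_iff_exp_lt h3).1 hu⟩

lemma mapsTo_exp_verticalClosedStrip_log (h1 : 0 < r₁) (h3 : 0 < r₃) :
    MapsTo exp (verticalClosedStrip (Real.log r₁) (Real.log r₃))
      {z : ℂ | r₁ ≤ ‖z‖ ∧ ‖z‖ ≤ r₃} :=
  fun _ ⟨hl, hu⟩ ↦ by
    rw [mem_ofPred_eq, norm_exp]
    exact ⟨(Real.log_le_iff_le_exp h1).1 hl, (Real.le_log_iff_exp_le h3).1 hu⟩

lemma closure_verticalStrip {l u : ℝ} (hlu : l < u) :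
    closure (verticalStrip l u) = verticalClosedStrip l u := by
  rw [verticalStrip, verticalClosedStrip, closure_preimage_re, closure_Ioo hlu.ne]

lemma isCompact_closedAnnulus (r₁ r₃ : ℝ) : IsCompact {z : ℂ | r₁ ≤ ‖z‖ ∧ ‖z‖ ≤ r₃} :=
  (isCompact_closedBall (0 : ℂ) r₃).of_isClosed_subset
    (isClosed_Icc.preimage continuous_norm) fun _ hz ↦ mem_closedBall_zero_iff.2 hz.2

theorem norm_le_pow_mul_pow_of_mem_closedAnnulus {E : Type*} [NormedAddCommGroup E]
    [NormedSpace ℂ E] {f : ℂ → E} {a b : ℝ} (h1 : 0 < r₁) (h13 : r₁ < r₃)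
    (hf : DifferentiableOn ℂ f {z : ℂ | r₁ < ‖z‖ ∧ ‖z‖ < r₃})
    (hfc : ContinuousOn f {z : ℂ | r₁ ≤ ‖z‖ ∧ ‖z‖ ≤ r₃})
    (ha : ∀ z ∈ sphere (0 : ℂ) r₁, ‖f z‖ ≤ a) (hb : ∀ z ∈ sphere (0 : ℂ) r₃, ‖f z‖ ≤ b)
    {w : ℂ} (hw : r₁ ≤ ‖w‖ ∧ ‖w‖ ≤ r₃) :
    ‖f w‖ ≤ a ^ (1 - (Real.log ‖w‖ - Real.log r₁) / (Real.log r₃ - Real.log r₁)) *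
      b ^ ((Real.log ‖w‖ - Real.log r₁) / (Real.log r₃ - Real.log r₁)) := by
  have h3 : 0 < r₃ := h1.trans h13
  have hlog : Real.log r₁ < Real.log r₃ := Real.log_lt_log h1 h13
  have hw0 : w ≠ 0 := norm_pos_iff.1 (h1.trans_le hw.1)
  have hd : DiffContOnCl ℂ (f ∘ exp) (verticalStrip (Real.log r₁) (Real.log r₃)) :=
    ⟨hf.comp differentiable_exp.differentiableOn (mapsTo_exp_verticalStrip_log h1 h3), by
      rw [closure_verticalStrip hlog]
      exact hfc.comp continuous_exp.continuousOn (mapsTo_exp_verticalClosedStrip_log h1 h3)⟩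
  have hB : BddAbove ((norm ∘ f ∘ exp) '' verticalClosedStrip (Real.log r₁) (Real.log r₃)) := by
    refine ((isCompact_closedAnnulus r₁ r₃).bddAbove_image
      (continuous_norm.comp_continuousOn hfc)).mono ?_
    rintro _ ⟨z, hz, rfl⟩
    exact ⟨exp z, mapsTo_exp_verticalClosedStrip_log h1 h3 hz, rfl⟩
  have hline {r : ℝ} (hr : 0 < r) (z : ℂ) (hz : z ∈ re ⁻¹' {Real.log r}) :
      exp z ∈ sphere (0 : ℂ) r := by
    rw [mem_sphere_zero_iff_norm, norm_exp, hz, Real.exp_log hr]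
  have hlogw : log w ∈ verticalClosedStrip (Real.log r₁) (Real.log r₃) := by
    rw [verticalClosedStrip, mem_preimage, log_re]
    exact ⟨Real.log_le_log h1 hw.1, Real.log_le_log (h1.trans_le hw.1) hw.2⟩
  simpa [exp_log hw0, log_re] using norm_le_interp_of_mem_verticalClosedStrip' hlog hlogw hd hB
    (fun z hz ↦ ha _ (hline h1 z hz)) (fun z hz ↦ hb _ (hline h3 z hz))

end Complex

lemma Real.log_div_log_div_eq_one_sub {r₁ r₂ r₃ : ℝ} (h1 : 0 < r₁) (h2 : 0 < r₂) (h13 : r₁ < r₃) :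
    Real.log (r₃ / r₂) / Real.log (r₃ / r₁) =
      1 - (Real.log r₂ - Real.log r₁) / (Real.log r₃ - Real.log r₁) := by
  have h3 : 0 < r₃ := h1.trans h13
  have hlog : Real.log r₁ < Real.log r₃ := Real.log_lt_log h1 h13
  rw [Real.log_div h3.ne' h2.ne', Real.log_div h3.ne' h1.ne']
  field_simp [(sub_pos.2 hlog).ne']
  ring

theorem stmt8 (f : ℂ → ℂ) (r₁ r₂ r₃ : ℝ) (h1 : 0 < r₁) (h12 : r₁ < r₂) (h23 : r₂ < r₃)
    (hf : DifferentiableOn ℂ f {z : ℂ | r₁ < ‖z‖ ∧ ‖z‖ < r₃})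
    (hfc : ContinuousOn f {z : ℂ | r₁ ≤ ‖z‖ ∧ ‖z‖ ≤ r₃})
    (M : ℝ → ℝ)
    (hM : ∀ r, M r = sSup ((fun z => ‖f z‖) '' Metric.sphere (0 : ℂ) r))
    (θ : ℝ) (hθ : θ = Real.log (r₃ / r₂) / Real.log (r₃ / r₁)) :
    M r₂ ≤ M r₁ ^ θ * M r₃ ^ (1 - θ) := by
  have h13 : r₁ < r₃ := h12.trans h23
  have hM_nonneg (r : ℝ) : 0 ≤ M r :=
    hM r ▸ Real.sSup_nonneg (by rintro _ ⟨z, _, rfl⟩; exact norm_nonneg _)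
  have hle_M {r : ℝ} (hr : r₁ ≤ r ∧ r ≤ r₃) (z : ℂ) (hz : z ∈ sphere (0 : ℂ) r) : ‖f z‖ ≤ M r :=
    hM r ▸ le_csSup ((isCompact_sphere 0 r).bddAbove_image (continuous_norm.comp_continuousOn
      (hfc.mono fun w hw ↦ by rwa [mem_ofPred_eq, mem_sphere_zero_iff_norm.1 hw]))) ⟨z, hz, rfl⟩
  rw [hM r₂]
  refine Real.sSup_le ?_
    (mul_nonneg (Real.rpow_nonneg (hM_nonneg r₁) _) (Real.rpow_nonneg (hM_nonneg r₃) _))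
  rintro _ ⟨w, hw, rfl⟩
  rw [mem_sphere_zero_iff_norm] at hw
  rw [hθ, Real.log_div_log_div_eq_one_sub h1 (h1.trans h12) h13, sub_sub_cancel, ← hw]
  exact norm_le_pow_mul_pow_of_mem_closedAnnulus h1 h13 hf hfc (hle_M ⟨le_rfl, h13.le⟩)
    (hle_M ⟨h13.le, le_rfl⟩) (hw ▸ ⟨h12.le, h23.le⟩)
end

section
/- Let G : ℂ → (functions on ℂ) be given by G(z)(ζ) := exp(−(z−ζ)²), and fix a continuous weight ν : ℂ → (0,∞) of the form ν(ζ) = exp(a·|Re ζ|^γ) with a ∈ ℝ, 0 < γ ≤ 1. Let S ⊂ ℂ be a horizontal strip {ζ : |Im ζ| ≤ h} for some h > 0. Then for every z₀ ∈ ℂ, the map z ↦ G(z) is differentiable at z₀ with respect to the sup-norm ‖F‖ := sup_{ζ ∈ S} |F(ζ)|·ν(ζ)^{−1}; that is, (G(z₀+h') − G(z₀))/h' converges in this norm, as h' → 0 in ℂ∖{0}, to the function ζ ↦ −2(z₀−ζ)·exp(−(z₀−ζ)²). -/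
/-!
Write `w = z₀ - ζ` and `u = -(2wh' + h'²)`, so that `e^{-(w+h')²} = e^{-w²} e^u`. The error of the
difference quotient is then `e^{-w²} ((e^u - 1 - u)/h' - h')`, which for `|h'| ≤ 1` is at most
`3 |h'| |e^{-w²}| e^{4|w| + 2}`. On the strip `|e^{-w²}| = e^{(Im w)² - (Re w)²}` decays like a
Gaussian in `Re w`, so it absorbs both `e^{4|w|}` and the inverse weight, which grows at most like
`e^{|a| (1 + |Re ζ|)}` because `0 < γ ≤ 1`.
-/

open Complex

lemma norm_cexp_sub_one_sub_le (u : ℂ) : ‖cexp u - 1 - u‖ ≤ ‖u‖ ^ 2 * Real.exp ‖u‖ := by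
  simpa [Finset.sum_range_succ, sub_sub] using norm_exp_sub_sum_le_norm_mul_exp u 2

lemma cexp_neg_add_sq_slope_sub_eq (w h' : ℂ) (hh' : h' ≠ 0) :
    (cexp (-(w + h') ^ 2) - cexp (-w ^ 2)) / h' - (-2 * w * cexp (-w ^ 2)) =
      cexp (-w ^ 2) *
        ((cexp (-(2 * w * h' + h' ^ 2)) - 1 - -(2 * w * h' + h' ^ 2)) / h' - h') := by
  rw [show -(w + h') ^ 2 = -w ^ 2 + -(2 * w * h' + h' ^ 2) by ring, exp_add]
  field_simp
  ring

lemma norm_cexp_sub_one_sub_div_sub_le (w h' : ℂ) (hh' : h' ≠ 0) (hh'1 : ‖h'‖ ≤ 1) :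
    ‖(cexp (-(2 * w * h' + h' ^ 2)) - 1 - -(2 * w * h' + h' ^ 2)) / h' - h'‖ ≤
      3 * ‖h'‖ * Real.exp (2 * ‖w‖ + 1) ^ 2 := by
  set u := -(2 * w * h' + h' ^ 2)
  set K := 2 * ‖w‖ + 1
  set H := ‖h'‖
  have hK : 0 ≤ K := by positivity
  have hH : 0 ≤ H := norm_nonneg h'
  have hu : ‖u‖ ≤ K * H := by
    calc ‖u‖ ≤ ‖2 * w * h'‖ + ‖h' ^ 2‖ := (norm_neg _).trans_le (norm_add_le _ _)
      _ = 2 * ‖w‖ * H + H ^ 2 := by simp [H]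
      _ ≤ K * H := by nlinarith
  have hrem : ‖cexp u - 1 - u‖ ≤ (K * H) ^ 2 * Real.exp K :=
    calc ‖cexp u - 1 - u‖ ≤ ‖u‖ ^ 2 * Real.exp ‖u‖ := norm_cexp_sub_one_sub_le u
      _ ≤ (K * H) ^ 2 * Real.exp K := by
        gcongr
        exact hu.trans (mul_le_of_le_one_right hK hh'1)
  have hsq : K ^ 2 ≤ 2 * Real.exp K := by linarith [Real.quadratic_le_exp_of_nonneg hK]
  have hexp : 1 ≤ Real.exp K := Real.one_le_exp hK
  calc ‖(cexp u - 1 - u) / h' - h'‖ ≤ ‖(cexp u - 1 - u) / h'‖ + H := norm_sub_le _ _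
    _ ≤ H * (K ^ 2 * Real.exp K) + H := by
        gcongr ?_ + H
        rw [norm_div, div_le_iff₀ (norm_pos_iff.2 hh')]
        linarith [show (K * H) ^ 2 * Real.exp K = H * (K ^ 2 * Real.exp K) * H by ring]
    _ ≤ 3 * H * Real.exp K ^ 2 := by
        nlinarith [mul_le_mul_of_nonneg_left hsq (mul_nonneg hH (Real.exp_pos K).le),
          mul_le_mul_of_nonneg_left (one_le_pow₀ hexp (n := 2)) hH]

lemma norm_cexp_neg_sq_slope_sub_deriv_le (w h' : ℂ) (hh' : h' ≠ 0) (hh'1 : ‖h'‖ ≤ 1) :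
    ‖(cexp (-(w + h') ^ 2) - cexp (-w ^ 2)) / h' - (-2 * w * cexp (-w ^ 2))‖ ≤
      3 * ‖h'‖ * Real.exp ((-w ^ 2).re + 4 * ‖w‖ + 2) := by
  rw [cexp_neg_add_sq_slope_sub_eq w h' hh', norm_mul, norm_exp]
  calc _ ≤ Real.exp (-w ^ 2).re * (3 * ‖h'‖ * Real.exp (2 * ‖w‖ + 1) ^ 2) := by
        gcongr
        exact norm_cexp_sub_one_sub_div_sub_le w h' hh' hh'1
    _ = 3 * ‖h'‖ * Real.exp ((-w ^ 2).re + 4 * ‖w‖ + 2) := by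
        rw [pow_two (Real.exp _), ← Real.exp_add, mul_left_comm, ← Real.exp_add]
        ring_nf

lemma neg_sq_re_add_mul_norm_le (w : ℂ) {B c : ℝ} (hc : 0 ≤ c) (hw : |w.im| ≤ B) :
    (-w ^ 2).re + c * ‖w‖ ≤ B ^ 2 + c * B + c ^ 2 / 4 := by
  have hre : (-w ^ 2).re = |w.im| ^ 2 - |w.re| ^ 2 := by
    simp [sq, mul_re]
  have hnorm := norm_le_abs_re_add_abs_im w
  rw [hre]
  nlinarith [abs_nonneg w.im, sq_nonneg (|w.re| - c / 2)]

lemma rpow_le_one_add {x γ : ℝ} (hx : 0 ≤ x) (hγ0 : 0 ≤ γ) (hγ1 : γ ≤ 1) : x ^ γ ≤ 1 + x := by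
  rcases le_or_gt x 1 with hx1 | hx1
  · linarith [Real.rpow_le_one hx hx1 hγ0]
  · linarith [Real.rpow_le_self_of_one_le hx1.le hγ1]

lemma inv_exp_mul_abs_rpow_le (a x : ℝ) {γ : ℝ} (hγ0 : 0 ≤ γ) (hγ1 : γ ≤ 1) :
    (Real.exp (a * |x| ^ γ))⁻¹ ≤ Real.exp (|a| * (1 + |x|)) := by
  rw [← Real.exp_neg, Real.exp_le_exp, ← neg_mul]
  calc -a * |x| ^ γ ≤ |a| * |x| ^ γ := by gcongr; exact neg_le_abs a
    _ ≤ |a| * (1 + |x|) := by gcongr; exact rpow_le_one_add (abs_nonneg x) hγ0 hγ1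

theorem stmt11_general (a γ h : ℝ) (hγ0 : 0 < γ) (hγ1 : γ ≤ 1) (z₀ : ℂ) :
    ∀ ε > 0, ∃ δ > 0, ∀ h' : ℂ, h' ≠ 0 → ‖h'‖ < δ →
      ∀ ζ : ℂ, |ζ.im| ≤ h →
        ‖(Complex.exp (-(z₀ + h' - ζ) ^ 2) - Complex.exp (-(z₀ - ζ) ^ 2)) / h' -
            (-2 * (z₀ - ζ) * Complex.exp (-(z₀ - ζ) ^ 2))‖ *
          (Real.exp (a * |ζ.re| ^ γ))⁻¹ ≤ ε := by
  intro ε hε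
  set c := 4 + |a|
  set B := |z₀.im| + h
  set C := 3 * Real.exp (B ^ 2 + c * B + c ^ 2 / 4 + 2 + |a| * (1 + |z₀.re|))
  have hC : 0 < C := by positivity
  refine ⟨min 1 (ε / C), by positivity, fun h' hh' hδ ζ hζ => ?_⟩
  set w := z₀ - ζ
  have hw : |w.im| ≤ B := by
    simpa [w, B] using (abs_sub z₀.im ζ.im).trans (by gcongr)
  have hζre : |ζ.re| ≤ |z₀.re| + ‖w‖ := by
    calc |ζ.re| = |z₀.re - w.re| := by simp [w]
      _ ≤ |z₀.re| + ‖w‖ := (abs_sub _ _).trans (by gcongr; exact abs_re_le_norm w)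
  rw [show z₀ + h' - ζ = w + h' by ring]
  calc _ ≤ 3 * ‖h'‖ * Real.exp ((-w ^ 2).re + 4 * ‖w‖ + 2) * Real.exp (|a| * (1 + |ζ.re|)) :=
        mul_le_mul (norm_cexp_neg_sq_slope_sub_deriv_le w h' hh' (hδ.le.trans (min_le_left _ _)))
          (inv_exp_mul_abs_rpow_le a ζ.re hγ0.le hγ1) (by positivity) (by positivity)
    _ ≤ ‖h'‖ * C := by
        rw [mul_assoc, ← Real.exp_add, mul_comm 3, mul_assoc]
        have hgauss := neg_sq_re_add_mul_norm_le w (c := c) (by positivity) hw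
        simp only [C, c] at hgauss ⊢
        gcongr ‖h'‖ * (3 * Real.exp ?_)
        nlinarith [mul_le_mul_of_nonneg_left hζre (abs_nonneg a)]
    _ ≤ ε := ((lt_div_iff₀ hC).1 (hδ.trans_le (min_le_right _ _))).le

theorem stmt11 (a γ h : ℝ) (hγ0 : 0 < γ) (hγ1 : γ ≤ 1) (hh : 0 < h) (z₀ : ℂ) :
    ∀ ε > 0, ∃ δ > 0, ∀ h' : ℂ, h' ≠ 0 → ‖h'‖ < δ →
      ∀ ζ : ℂ, |ζ.im| ≤ h →
        ‖(Complex.exp (-(z₀ + h' - ζ) ^ 2) - Complex.exp (-(z₀ - ζ) ^ 2)) / h' -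
            (-2 * (z₀ - ζ) * Complex.exp (-(z₀ - ζ) ^ 2))‖ *
          (Real.exp (a * |ζ.re| ^ γ))⁻¹ ≤ ε :=
  stmt11_general a γ h hγ0 hγ1 z₀
end

section
/- Let t ≥ 1 and let K ⊂ ℝ be compact. Define U_t(K) := {z ∈ ℂ : dist(z, K) < 1/t}. Then U_t(K) has only finitely many connected components; in fact at most t·(diam(K))/2 + 1 components, and each component Z satisfies λ(Z ∩ ℝ) ≥ 2/t where λ is Lebesgue measure on ℝ. -/
/-!
Every component `Z` of the `1/t`-neighbourhood of `K` in `ℂ` contains a whole disc of radius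
`1/t` centred at a point of `K`, so its trace `Z ∩ ℝ` contains an interval of length `2/t`.
These traces are pairwise disjoint and lie in the `1/t`-neighbourhood of `K` in `ℝ`, whose
length is at most `diam K + 2/t`; comparing measures bounds the number of components.
-/

open Set Metric MeasureTheory ENNReal

section Counting

variable {ι α : Type*} [MeasurableSpace α] {μ : Measure α} {T : ι → Set α} {A : Set α}
  {m : ℝ≥0∞}

theorem Finset.card_mul_le_measure_of_pairwiseDisjoint {s : Finset ι}
    (hmeas : ∀ i ∈ s, MeasurableSet (T i)) (hdisj : (s : Set ι).PairwiseDisjoint T)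
    (hsub : ∀ i ∈ s, T i ⊆ A) (hm : ∀ i ∈ s, m ≤ μ (T i)) : s.card * m ≤ μ A :=
  calc s.card * m = ∑ _i ∈ s, m := by rw [Finset.sum_const, nsmul_eq_mul]
    _ ≤ ∑ i ∈ s, μ (T i) := Finset.sum_le_sum hm
    _ = μ (⋃ i ∈ s, T i) := (measure_biUnion_finset hdisj hmeas).symm
    _ ≤ μ A := measure_mono (iUnion₂_subset hsub)

variable {S : Set ι}

theorem Set.finite_of_pairwiseDisjoint_measure_ge (hmeas : ∀ i ∈ S, MeasurableSet (T i))
    (hdisj : S.PairwiseDisjoint T) (hsub : ∀ i ∈ S, T i ⊆ A) (hm : ∀ i ∈ S, m ≤ μ (T i))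
    (hm0 : m ≠ 0) (hA : μ A ≠ ∞) : S.Finite := by
  by_contra hinf
  obtain ⟨n, hn⟩ := ENNReal.exists_nat_mul_gt hm0 hA
  obtain ⟨s, hsS, rfl⟩ := Set.Infinite.exists_subset_card_eq hinf n
  exact (Finset.card_mul_le_measure_of_pairwiseDisjoint (fun i hi => hmeas i (hsS hi))
    (hdisj.subset hsS) (fun i hi => hsub i (hsS hi)) (fun i hi => hm i (hsS hi))).not_gt hn

theorem Set.ncard_mul_le_measure_of_pairwiseDisjoint (hmeas : ∀ i ∈ S, MeasurableSet (T i))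
    (hdisj : S.PairwiseDisjoint T) (hsub : ∀ i ∈ S, T i ⊆ A) (hm : ∀ i ∈ S, m ≤ μ (T i)) :
    S.ncard * m ≤ μ A := by
  by_cases hS : S.Finite
  · rw [Set.ncard_eq_toFinset_card S hS]
    exact Finset.card_mul_le_measure_of_pairwiseDisjoint (fun i hi => hmeas i (by simpa using hi))
      (by simpa using hdisj) (fun i hi => hsub i (by simpa using hi))
      (fun i hi => hm i (by simpa using hi))
  · simp [Set.Infinite.ncard hS]

end Counting

section ComponentsIn

variable {X : Type*} [TopologicalSpace X] {F Z : Set X}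

def componentsIn (F : Set X) : Set (Set X) :=
  {Z | ∃ z ∈ F, Z = connectedComponentIn F z}

theorem subset_of_mem_componentsIn (hZ : Z ∈ componentsIn F) : Z ⊆ F := by
  obtain ⟨z, -, rfl⟩ := hZ
  exact connectedComponentIn_subset F z

theorem IsOpen.of_mem_componentsIn [LocallyConnectedSpace X] (hF : IsOpen F)
    (hZ : Z ∈ componentsIn F) : IsOpen Z := by
  obtain ⟨z, -, rfl⟩ := hZ
  exact hF.connectedComponentIn

theorem pairwiseDisjoint_componentsIn (F : Set X) : (componentsIn F).PairwiseDisjoint id := by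
  rintro _ ⟨x, -, rfl⟩ _ ⟨y, -, rfl⟩ hne
  exact Set.disjoint_left.2 fun _ hx hy =>
    hne ((connectedComponentIn_eq hx).trans (connectedComponentIn_eq hy).symm)

end ComponentsIn

theorem Metric.exists_ball_subset_connectedComponentIn_thickening {E : Type*}
    [SeminormedAddCommGroup E] [NormedSpace ℝ E] {s : Set E} {δ : ℝ} {z : E}
    (hz : z ∈ thickening δ s) : ∃ x ∈ s, ball x δ ⊆ connectedComponentIn (thickening δ s) z := by
  obtain ⟨x, hx, hzx⟩ := mem_thickening_iff.1 hz
  exact ⟨x, hx, (convex_ball x δ).isPreconnected.subset_connectedComponentIn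
    (mem_ball.2 hzx) (ball_subset_thickening hx δ)⟩

theorem Real.volume_thickening_le {K : Set ℝ} (hK : Bornology.IsBounded K) (δ : ℝ) :
    volume (thickening δ K) ≤ ENNReal.ofReal (diam K + 2 * δ) := by
  have hsub : thickening δ K ⊆ Ioo (sInf K - δ) (sSup K + δ) := by
    intro y hy
    obtain ⟨x, hx, hyx⟩ := mem_thickening_iff.1 hy
    rw [Real.dist_eq, abs_lt] at hyx
    have := csInf_le hK.bddBelow hx
    have := le_csSup hK.bddAbove hx
    constructor <;> linarith
  calc volume (thickening δ K) ≤ volume (Ioo (sInf K - δ) (sSup K + δ)) := measure_mono hsub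
    _ = ENNReal.ofReal (diam K + 2 * δ) := by
      rw [Real.volume_Ioo, Real.diam_eq hK]
      ring_nf
namespace Complex

theorem preimage_ofReal_thickening_image (K : Set ℝ) (δ : ℝ) :
    ((↑) : ℝ → ℂ) ⁻¹' thickening δ (((↑) : ℝ → ℂ) '' K) = thickening δ K := by
  ext x
  simp [mem_thickening_iff, isometry_ofReal.dist_eq]

variable {K : Set ℝ} {δ : ℝ}

theorem ofReal_two_mul_le_volume_preimage_of_mem_componentsIn_thickening {Z : Set ℂ}
    (hZ : Z ∈ componentsIn (thickening δ (((↑) : ℝ → ℂ) '' K))) :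
    ENNReal.ofReal (2 * δ) ≤ volume (((↑) : ℝ → ℂ) ⁻¹' Z) := by
  obtain ⟨z, hz, rfl⟩ := hZ
  obtain ⟨_, ⟨x, -, rfl⟩, hball⟩ := exists_ball_subset_connectedComponentIn_thickening hz
  calc ENNReal.ofReal (2 * δ) = volume (ball x δ) := (Real.volume_ball x δ).symm
    _ ≤ _ := measure_mono <| by
      rw [← isometry_ofReal.preimage_ball]
      exact preimage_mono hball

theorem measurableSet_preimage_ofReal_of_mem_componentsIn_thickening {Z : Set ℂ}
    (hZ : Z ∈ componentsIn (thickening δ (((↑) : ℝ → ℂ) '' K))) :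
    MeasurableSet (((↑) : ℝ → ℂ) ⁻¹' Z) :=
  ((isOpen_thickening.of_mem_componentsIn hZ).preimage continuous_ofReal).measurableSet

theorem pairwiseDisjoint_preimage_ofReal_componentsIn (F : Set ℂ) :
    (componentsIn F).PairwiseDisjoint (((↑) : ℝ → ℂ) ⁻¹' ·) :=
  fun _ hZ _ hZ' hne => (pairwiseDisjoint_componentsIn F hZ hZ' hne).preimage _

theorem preimage_ofReal_subset_thickening_of_mem_componentsIn {Z : Set ℂ}
    (hZ : Z ∈ componentsIn (thickening δ (((↑) : ℝ → ℂ) '' K))) :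
    ((↑) : ℝ → ℂ) ⁻¹' Z ⊆ thickening δ K :=
  preimage_ofReal_thickening_image K δ ▸ preimage_mono (subset_of_mem_componentsIn hZ)

theorem ncard_componentsIn_thickening_mul_le (hK : Bornology.IsBounded K) (δ : ℝ) :
    (componentsIn (thickening δ (((↑) : ℝ → ℂ) '' K))).ncard * ENNReal.ofReal (2 * δ) ≤
      ENNReal.ofReal (diam K + 2 * δ) :=
  (Set.ncard_mul_le_measure_of_pairwiseDisjoint
    (fun _ => measurableSet_preimage_ofReal_of_mem_componentsIn_thickening)
    (pairwiseDisjoint_preimage_ofReal_componentsIn _)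
    (fun _ => preimage_ofReal_subset_thickening_of_mem_componentsIn)
    (fun _ => ofReal_two_mul_le_volume_preimage_of_mem_componentsIn_thickening)).trans
    (Real.volume_thickening_le hK δ)

theorem finite_componentsIn_thickening (hK : Bornology.IsBounded K) (hδ : 0 < δ) :
    (componentsIn (thickening δ (((↑) : ℝ → ℂ) '' K))).Finite :=
  Set.finite_of_pairwiseDisjoint_measure_ge
    (fun _ => measurableSet_preimage_ofReal_of_mem_componentsIn_thickening)
    (pairwiseDisjoint_preimage_ofReal_componentsIn _)
    (fun _ => preimage_ofReal_subset_thickening_of_mem_componentsIn)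
    (fun _ => ofReal_two_mul_le_volume_preimage_of_mem_componentsIn_thickening)
    (by simpa using hδ) ((Real.volume_thickening_le hK δ).trans_lt ofReal_lt_top).ne

end Complex

theorem stmt12 (t : ℝ) (ht : 1 ≤ t) (K : Set ℝ) (hK : IsCompact K)
    (U : Set ℂ) (hU : U = {z : ℂ | ∃ x ∈ K, dist z (x : ℂ) < 1 / t})
    (S : Set (Set ℂ)) (hS : S = {Z | ∃ z ∈ U, Z = connectedComponentIn U z}) :
    S.Finite ∧ (S.ncard : ℝ) ≤ t * Metric.diam K / 2 + 1 ∧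
      ∀ Z ∈ S, ENNReal.ofReal (2 / t) ≤ MeasureTheory.volume {x : ℝ | (x : ℂ) ∈ Z} := by
  have ht0 : 0 < t := one_pos.trans_le ht
  obtain rfl : U = thickening (1 / t) (((↑) : ℝ → ℂ) '' K) := by
    ext z
    simp [hU, mem_thickening_iff]
  obtain rfl : S = componentsIn _ := hS
  have htwo : 2 / t = 2 * (1 / t) := by ring
  refine ⟨Complex.finite_componentsIn_thickening hK.isBounded (by positivity), ?_,
    fun Z hZ => htwo ▸ Complex.ofReal_two_mul_le_volume_preimage_of_mem_componentsIn_thickening hZ⟩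
  have hcount := Complex.ncard_componentsIn_thickening_mul_le hK.isBounded (1 / t)
  rw [← ofReal_natCast, ← ofReal_mul (by positivity),
    ofReal_le_ofReal_iff (by positivity)] at hcount
  have := mul_le_mul_of_nonneg_left hcount (by positivity : 0 ≤ t / 2)
  field_simp at this
  linarith
end

section
/- Let (a_n) be strictly increasing with all a_n < 0 and lim a_n = 0, let 0 < γ ≤ 1, ν_n(z) := exp(a_n |Re z|^γ), and let c_n := exp(1/a_n). Fix p < q < k in ℕ and set θ := ln(c_p/c_q)/ln(c_p/c_k). Then there exists C > 0 such that for all ζ ∈ ℝ with |ζ| ≥ 1 + 1/c_k: (sup_{|z−ζ|≤c_k} ν_k(z))^θ · (sup_{|z−ζ|≤c_p} ν_p(z))^{1−θ} ≤ C · inf_{|z−ζ|≤c_q} ν_q(z). -/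
/-!
On the disk `|z - ζ| ≤ r` one has `|ζ| - r ≤ |Re z| ≤ |ζ| + r`, so for `a < 0` the weight
`exp (a |Re z|^γ)` is at most `exp (a (|ζ| - r)^γ)` and at least `exp (a (|ζ| + r)^γ)`.
The exponent `θ` is chosen so that `1/a_q = θ/a_k + (1-θ)/a_p`; since `a_q` is then a weighted
harmonic mean of the negative numbers `a_k, a_p`, it dominates `θ a_k + (1-θ) a_p`. Together with
`(|ζ| - c_p)^γ ≤ (|ζ| - c_k)^γ` and the subadditivity `(|ζ| + c_q)^γ ≤ (|ζ| - c_p)^γ + (c_p + c_q)^γ`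
of `t ↦ t^γ` for `γ ≤ 1`, the exponents compare up to the constant `|a_q| (c_p + c_q)^γ`.
-/

open Metric Real

lemma abs_abs_re_sub_le_of_mem_closedBall {z : ℂ} {ζ r : ℝ} (hz : z ∈ closedBall (ζ : ℂ) r) :
    |(|z.re| - |ζ|)| ≤ r :=
  calc |(|z.re| - |ζ|)| ≤ |(z - ζ).re| := by simpa using abs_abs_sub_abs_le_abs_sub z.re ζ
    _ ≤ ‖z - ζ‖ := Complex.abs_re_le_norm _
    _ ≤ r := by rwa [← dist_eq_norm]

lemma sSup_image_exp_mul_abs_re_rpow_le {a γ ζ r : ℝ} (ha : a ≤ 0) (hγ : 0 ≤ γ) (hr : r ≤ |ζ|) :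
    sSup ((fun z : ℂ => exp (a * |z.re| ^ γ)) '' closedBall (ζ : ℂ) r) ≤
      exp (a * (|ζ| - r) ^ γ) := by
  refine Real.sSup_le ?_ (exp_pos _).le
  rintro _ ⟨z, hz, rfl⟩
  have hre := (abs_le.1 (abs_abs_re_sub_le_of_mem_closedBall hz)).1
  exact exp_le_exp.2
    (mul_le_mul_of_nonpos_left (Real.rpow_le_rpow (by linarith) (by linarith) hγ) ha)

lemma exp_mul_add_rpow_le_sInf_image {a γ ζ r : ℝ} (ha : a ≤ 0) (hγ : 0 ≤ γ) (hr : 0 ≤ r) :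
    exp (a * (|ζ| + r) ^ γ) ≤
      sInf ((fun z : ℂ => exp (a * |z.re| ^ γ)) '' closedBall (ζ : ℂ) r) := by
  refine le_csInf ((nonempty_closedBall.2 hr).image _) ?_
  rintro _ ⟨z, hz, rfl⟩
  have hre := (abs_le.1 (abs_abs_re_sub_le_of_mem_closedBall hz)).2
  exact exp_le_exp.2
    (mul_le_mul_of_nonpos_left (Real.rpow_le_rpow (abs_nonneg _) (by linarith) hγ) ha)

lemma mem_Icc_and_mul_add_le_of_inv_interpolation {x y z θ : ℝ} (hxy : x < y) (hyz : y < z)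
    (hz : z < 0) (hθ : θ = (1 / x - 1 / y) / (1 / x - 1 / z)) :
    θ ∈ Set.Icc 0 1 ∧ θ * z + (1 - θ) * x ≤ y := by
  have hy : y < 0 := hyz.trans hz
  have hx : x < 0 := hxy.trans hy
  have hinv_xy : 1 / y < 1 / x := (one_div_lt_one_div_of_neg hy hx).2 hxy
  have hinv_yz : 1 / z < 1 / y := (one_div_lt_one_div_of_neg hz hy).2 hyz
  have hden : 0 < 1 / x - 1 / z := by linarith
  have hθ' : θ = (y - x) * z / ((z - x) * y) := by
    rw [hθ]
    field_simp [hx.ne, hy.ne, hz.ne]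
  refine ⟨⟨?_, ?_⟩, ?_⟩
  · rw [hθ]; exact div_nonneg (by linarith) hden.le
  · rw [hθ, div_le_one hden]; linarith
  · have hgap : θ * z + (1 - θ) * x - y = (y - x) * (z - y) / y := by
      rw [hθ']
      field_simp [hy.ne, (sub_pos.2 (hxy.trans hyz)).ne']
      ring
    have : (y - x) * (z - y) / y ≤ 0 :=
      div_nonpos_of_nonneg_of_nonpos (mul_nonneg (by linarith) (by linarith)) hy.le
    linarith

lemma interpolated_exponent_le {ak ap aq θ γ t rk rp rq : ℝ} (hak : ak ≤ 0) (haq : aq ≤ 0)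
    (hθ0 : 0 ≤ θ) (hmean : θ * ak + (1 - θ) * ap ≤ aq) (hγ0 : 0 ≤ γ) (hγ1 : γ ≤ 1)
    (hrk : rk ≤ rp) (hrp : rp ≤ t) (hrpq : 0 ≤ rp + rq) :
    θ * (ak * (t - rk) ^ γ) + (1 - θ) * (ap * (t - rp) ^ γ) ≤
      -aq * (rp + rq) ^ γ + aq * (t + rq) ^ γ := by
  have hXp : 0 ≤ (t - rp) ^ γ := Real.rpow_nonneg (by linarith) _
  have hXpk : (t - rp) ^ γ ≤ (t - rk) ^ γ := Real.rpow_le_rpow (by linarith) (by linarith) hγ0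
  have hsubadd : (t + rq) ^ γ ≤ (t - rp) ^ γ + (rp + rq) ^ γ := by
    convert Real.rpow_add_le_add_rpow (by linarith : 0 ≤ t - rp) hrpq hγ0 hγ1 using 2
    ring
  calc θ * (ak * (t - rk) ^ γ) + (1 - θ) * (ap * (t - rp) ^ γ)
      ≤ θ * (ak * (t - rp) ^ γ) + (1 - θ) * (ap * (t - rp) ^ γ) := by
        gcongr θ * ?_ + _
        exact mul_le_mul_of_nonpos_left hXpk hak
    _ = (θ * ak + (1 - θ) * ap) * (t - rp) ^ γ := by ring
    _ ≤ aq * (t - rp) ^ γ := mul_le_mul_of_nonneg_right hmean hXp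
    _ ≤ -aq * (rp + rq) ^ γ + aq * (t + rq) ^ γ := by
        linarith [mul_le_mul_of_nonpos_left hsubadd haq]

theorem stmt14_general (a : ℕ → ℝ) (ha : StrictMono a) (hneg : ∀ n, a n < 0)
    (γ : ℝ) (hγ0 : 0 < γ) (hγ1 : γ ≤ 1)
    (ν : ℕ → ℂ → ℝ) (hν : ∀ n z, ν n z = Real.exp (a n * |z.re| ^ γ))
    (c : ℕ → ℝ) (hc : ∀ n, c n = Real.exp (1 / a n))
    (p q k : ℕ) (hpq : p < q) (hqk : q < k)
    (θ : ℝ) (hθ : θ = Real.log (c p / c q) / Real.log (c p / c k)) :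
    ∃ C > 0, ∀ ζ : ℝ, 1 + 1 / c k ≤ |ζ| →
      sSup (ν k '' Metric.closedBall (ζ : ℂ) (c k)) ^ θ *
          sSup (ν p '' Metric.closedBall (ζ : ℂ) (c p)) ^ (1 - θ) ≤
        C * sInf (ν q '' Metric.closedBall (ζ : ℂ) (c q)) := by
  obtain rfl : ν = fun n z => exp (a n * |z.re| ^ γ) := funext₂ hν
  have hc_pos (n : ℕ) : 0 < c n := hc n ▸ exp_pos _
  have hc_lt_one (n : ℕ) : c n < 1 := hc n ▸ exp_lt_one_iff.2 (one_div_neg.2 (hneg n))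
  have hckp : c k ≤ c p := by
    rw [hc, hc]
    exact exp_le_exp.2 ((one_div_le_one_div_of_neg (hneg k) (hneg p)).2 (ha (hpq.trans hqk)).le)
  have hlog (m n : ℕ) : log (c m / c n) = 1 / a m - 1 / a n := by
    rw [hc, hc, ← exp_sub, log_exp]
  obtain ⟨⟨hθ0, hθ1⟩, hmean⟩ := mem_Icc_and_mul_add_le_of_inv_interpolation (ha hpq) (ha hqk)
    (hneg k) (hθ.trans (by rw [hlog, hlog]))
  refine ⟨exp (-a q * (c p + c q) ^ γ), exp_pos _, fun ζ hζ => ?_⟩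
  have hcp_le : c p ≤ |ζ| := by linarith [hc_lt_one p, one_div_pos.2 (hc_pos k)]
  have hsup_nonneg (n : ℕ) (r : ℝ) :
      0 ≤ sSup ((fun z : ℂ => exp (a n * |z.re| ^ γ)) '' closedBall (ζ : ℂ) r) :=
    Real.sSup_nonneg (by rintro _ ⟨z, -, rfl⟩; positivity)
  calc _ ≤ exp (a k * (|ζ| - c k) ^ γ) ^ θ * exp (a p * (|ζ| - c p) ^ γ) ^ (1 - θ) := by
        gcongr
        · exact rpow_nonneg (hsup_nonneg p _) _
        · exact hsup_nonneg k _
        · exact sSup_image_exp_mul_abs_re_rpow_le (hneg k).le hγ0.le (hckp.trans hcp_le)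
        · exact hsup_nonneg p _
        · exact sSup_image_exp_mul_abs_re_rpow_le (hneg p).le hγ0.le hcp_le
    _ = exp (θ * (a k * (|ζ| - c k) ^ γ) + (1 - θ) * (a p * (|ζ| - c p) ^ γ)) := by
        rw [← exp_mul, ← exp_mul, ← exp_add, mul_comm θ, mul_comm (1 - θ)]
    _ ≤ exp (-a q * (c p + c q) ^ γ + a q * (|ζ| + c q) ^ γ) :=
        exp_le_exp.2 (interpolated_exponent_le (hneg k).le (hneg q).le hθ0 hmean hγ0.le hγ1 hckp
          hcp_le (by linarith [hc_pos p, hc_pos q]))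
    _ ≤ _ := by
        rw [exp_add]
        gcongr
        exact exp_mul_add_rpow_le_sInf_image (hneg q).le hγ0.le (hc_pos q).le

theorem stmt14 (a : ℕ → ℝ) (ha : StrictMono a) (hneg : ∀ n, a n < 0)
    (hlim : Filter.Tendsto a Filter.atTop (nhds 0))
    (γ : ℝ) (hγ0 : 0 < γ) (hγ1 : γ ≤ 1)
    (ν : ℕ → ℂ → ℝ) (hν : ∀ n z, ν n z = Real.exp (a n * |z.re| ^ γ))
    (c : ℕ → ℝ) (hc : ∀ n, c n = Real.exp (1 / a n))
    (p q k : ℕ) (hpq : p < q) (hqk : q < k)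
    (θ : ℝ) (hθ : θ = Real.log (c p / c q) / Real.log (c p / c k)) :
    ∃ C > 0, ∀ ζ : ℝ, 1 + 1 / c k ≤ |ζ| →
      sSup (ν k '' Metric.closedBall (ζ : ℂ) (c k)) ^ θ *
          sSup (ν p '' Metric.closedBall (ζ : ℂ) (c p)) ^ (1 - θ) ≤
        C * sInf (ν q '' Metric.closedBall (ζ : ℂ) (c q)) :=
  stmt14_general a ha hneg γ hγ0 hγ1 ν hν c hc p q k hpq hqk θ hθ
end
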